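/- Let L ≥ 2 be even, N ≥ 1, and let nonnegative real link capacities be given: R⁽⁰⁾_j for j ∈ {1,…,N}, R⁽ˡ⁾_{ij} for 1 ≤ l ≤ L−1 and i,j ∈ {1,…,N}, and R⁽ᴸ⁾_i for i ∈ {1,…,N}. Define C̃ = min over all tuples Y = (y₁,…,y_L) of subsets of {1,…,N} of Σ_{l=0}^{L} min(|y_l|,|y_{l+1}^c|)·max_{i∈y_l, j∈y_{l+1}^c} R⁽ˡ⁾_{ij}, with conventions y₀ = {S} (|y₀| = 1), y_{L+1}^c = {D} (size 1), and a term equal to 0 when y_l or y_{l+1}^c is empty. Then there exists a path (i₁,…,i_L) ∈ {1,…,N}^L such that min{R⁽⁰⁾_{i₁}, min_{1≤l≤L−1} R⁽ˡ⁾_{i_l i_{l+1}}, R⁽ᴸ⁾_{i_L}} ≥ (2/(LN + 2))·C̃. -/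

import Mathlib

open scoped BigOperators

/-- Maximum of `f` over a finite set, `0` if the set is empty. -/
noncomputable def finsetMaxOn {α : Type*} (s : Finset α) (f : α → ℝ) : ℝ :=
  if h : s.Nonempty then s.sup' h f else 0

/-- The single-link relaxation of the value of the cut `y` in a layered network with
`L` relay layers of `N` relays each and link capacities `R0` (source to first layer),
`Rmid l i j` (relay `(l,i)` to relay `(l+1,j)`, `1 ≤ l ≤ L−1`) and `RL` (last layer to
destination): `Σ_{l=0}^{L} min(|y_l|,|y_{l+1}ᶜ|) · max_{i ∈ y_l, j ∈ y_{l+1}ᶜ} R⁽ˡ⁾_{ij}`,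
with `y₀ = {S}`, `y_{L+1}ᶜ = {D}`, a term being `0` when an index set is empty. -/
noncomputable def tildeCutValueR (L N : ℕ) (R0 : Fin N → ℝ)
    (Rmid : ℕ → Fin N → Fin N → ℝ) (RL : Fin N → ℝ)
    (y : ℕ → Finset (Fin N)) : ℝ :=
  (min 1 ((y 0)ᶜ.card) : ℝ) * finsetMaxOn ((y 0)ᶜ) R0
    + ∑ k ∈ Finset.range (L - 1),
        (min ((y k).card) (((y (k + 1))ᶜ).card) : ℝ) *
          finsetMaxOn ((y k) ×ˢ ((y (k + 1))ᶜ)) (fun p => Rmid (k + 1) p.1 p.2)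
    + (min ((y (L - 1)).card) 1 : ℝ) * finsetMaxOn (y (L - 1)) RL

/-- `C̃`: the minimum over all cuts of the single-link relaxation of the cut value. -/
noncomputable def tildeCapR (L N : ℕ) (R0 : Fin N → ℝ)
    (Rmid : ℕ → Fin N → Fin N → ℝ) (RL : Fin N → ℝ) : ℝ :=
  sInf {c : ℝ | ∃ y : ℕ → Finset (Fin N), c = tildeCutValueR L N R0 Rmid RL y}

/-- Capacity of the path choosing relay `i k` in layer `k+1`: the minimum of its `L+1`
link capacities. -/
noncomputable def pathCapR (L N : ℕ) (R0 : Fin N → ℝ)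
    (Rmid : ℕ → Fin N → Fin N → ℝ) (RL : Fin N → ℝ) (i : ℕ → Fin N) : ℝ :=
  (Finset.range (L + 1)).inf' ⟨0, by simp⟩ (fun t =>
    if t = 0 then R0 (i 0)
    else if t = L then RL (i (L - 1))
    else Rmid t (i (t - 1)) (i t))

lemma maxOn_nonneg {α : Type*} (s : Finset α) (f : α → ℝ) (h : ∀ a ∈ s, 0 ≤ f a) :
    0 ≤ finsetMaxOn s f := by
  unfold finsetMaxOn
  split_ifs with hs
  · obtain ⟨a, ha⟩ := hs
    exact (h a ha).trans (Finset.le_sup' f ha)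
  · exact le_refl 0

lemma maxOn_le {α : Type*} (s : Finset α) (f : α → ℝ) {M : ℝ} (hM : 0 ≤ M)
    (h : ∀ a ∈ s, f a ≤ M) : finsetMaxOn s f ≤ M := by
  unfold finsetMaxOn
  split_ifs with hs
  · exact Finset.sup'_le hs f h
  · exact hM

lemma tildeCutValueR_nonneg (L N : ℕ) (R0 : Fin N → ℝ)
    (Rmid : ℕ → Fin N → Fin N → ℝ) (RL : Fin N → ℝ)
    (hR0 : ∀ j, 0 ≤ R0 j) (hRmid : ∀ l i j, 0 ≤ Rmid l i j) (hRL : ∀ i, 0 ≤ RL i)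
    (y : ℕ → Finset (Fin N)) : 0 ≤ tildeCutValueR L N R0 Rmid RL y := by
  unfold tildeCutValueR
  have h1 : (0:ℝ) ≤ (min 1 ((y 0)ᶜ.card) : ℝ) * finsetMaxOn ((y 0)ᶜ) R0 :=
    mul_nonneg (le_min one_pos.le (Nat.cast_nonneg _)) (maxOn_nonneg _ _ (fun a _ => hR0 a))
  have h2 : (0:ℝ) ≤ ∑ k ∈ Finset.range (L - 1),
      (min ((y k).card) (((y (k + 1))ᶜ).card) : ℝ) *
        finsetMaxOn ((y k) ×ˢ ((y (k + 1))ᶜ)) (fun p => Rmid (k + 1) p.1 p.2) := by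
    apply Finset.sum_nonneg
    intro k _
    exact mul_nonneg (le_min (Nat.cast_nonneg _) (Nat.cast_nonneg _))
      (maxOn_nonneg _ _ (fun a _ => hRmid _ _ _))
  have h3 : (0:ℝ) ≤ (min ((y (L - 1)).card) 1 : ℝ) * finsetMaxOn (y (L - 1)) RL :=
    mul_nonneg (le_min (Nat.cast_nonneg _) one_pos.le) (maxOn_nonneg _ _ (fun a _ => hRL a))
  linarith

lemma pathCapR_nonneg (L N : ℕ) (R0 : Fin N → ℝ)
    (Rmid : ℕ → Fin N → Fin N → ℝ) (RL : Fin N → ℝ)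
    (hR0 : ∀ j, 0 ≤ R0 j) (hRmid : ∀ l i j, 0 ≤ Rmid l i j) (hRL : ∀ i, 0 ≤ RL i)
    (i : ℕ → Fin N) : 0 ≤ pathCapR L N R0 Rmid RL i := by
  unfold pathCapR
  apply Finset.le_inf'
  intro t _
  split_ifs
  · exact hR0 _
  · exact hRL _
  · exact hRmid _ _ _

lemma min_le_half_add (x y : ℝ) : min x y ≤ (x + y) / 2 := by
  have h1 := min_le_left x y
  have h2 := min_le_right x y
  linarith

/-- For even `L ≥ 2`, `N ≥ 1` and nonnegative link capacities, there is a path whose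
capacity is at least `(2/(LN + 2))·C̃`. -/
theorem path_from_tilde_even (L N : ℕ) (hLeven : Even L) (hL2 : 2 ≤ L) (hN : 1 ≤ N)
    (R0 : Fin N → ℝ) (Rmid : ℕ → Fin N → Fin N → ℝ) (RL : Fin N → ℝ)
    (hR0 : ∀ j, 0 ≤ R0 j) (hRmid : ∀ l i j, 0 ≤ Rmid l i j) (hRL : ∀ i, 0 ≤ RL i) :
    ∃ i : ℕ → Fin N,
      (2 / ((L : ℝ) * (N : ℝ) + 2)) * tildeCapR L N R0 Rmid RL ≤
        pathCapR L N R0 Rmid RL i := by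
  classical
  have hNpos : 0 < N := hN
  have hFN : Nonempty (Fin N) := ⟨⟨0, hNpos⟩⟩
  -- extension of a finite path to ℕ
  set ext : (Fin L → Fin N) → (ℕ → Fin N) :=
    fun g k => if h : k < L then g ⟨k, h⟩ else g ⟨0, by omega⟩ with hext
  have hU : (Finset.univ : Finset (Fin L → Fin N)).Nonempty := Finset.univ_nonempty
  set M : ℝ := Finset.univ.sup' hU (fun g => pathCapR L N R0 Rmid RL (ext g)) with hMdef
  have hpath_congr : ∀ i i' : ℕ → Fin N, (∀ k, k < L → i k = i' k) →
      pathCapR L N R0 Rmid RL i = pathCapR L N R0 Rmid RL i' := by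
    intro i i' h
    unfold pathCapR
    apply Finset.inf'_congr _ rfl
    intro t ht
    simp only [Finset.mem_range] at ht
    by_cases h0 : t = 0
    · simp [h0, h 0 (by omega)]
    · by_cases hL : t = L
      · simp [if_neg h0, if_pos hL, h (L - 1) (by omega)]
      · simp [if_neg h0, if_neg hL, h t (by omega), h (t - 1) (by omega)]
  have hany_le_M : ∀ i : ℕ → Fin N, pathCapR L N R0 Rmid RL i ≤ M := by
    intro i
    have he : pathCapR L N R0 Rmid RL i
        = pathCapR L N R0 Rmid RL (ext (fun a : Fin L => i a.1)) := by
      apply hpath_congr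
      intro k hk
      simp [hext, hk]
    rw [he, hMdef]
    exact Finset.le_sup' (fun g => pathCapR L N R0 Rmid RL (ext g)) (Finset.mem_univ (fun a : Fin L => i a.1))
  have hM0 : 0 ≤ M := le_trans
    (pathCapR_nonneg L N R0 Rmid RL hR0 hRmid hRL (ext (fun _ => ⟨0, hNpos⟩)))
    (hany_le_M _)
  -- reachable sets
  set z : ℕ → Finset (Fin N) := fun k =>
    Nat.rec (Finset.univ.filter (fun j => M < R0 j))
      (fun k zk => Finset.univ.filter (fun j => ∃ i ∈ zk, M < Rmid (k + 1) i j)) k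
    with hzdef
  have hz0 : ∀ j, j ∈ z 0 ↔ M < R0 j := by
    intro j; simp [hzdef]
  have hzS : ∀ k j, j ∈ z (k + 1) ↔ ∃ i ∈ z k, M < Rmid (k + 1) i j := by
    intro k j; simp [hzdef]
  have hchain : ∀ k, ∀ i ∈ z k, ∃ f : ℕ → Fin N, f k = i ∧ M < R0 (f 0) ∧
      ∀ t, 1 ≤ t → t ≤ k → M < Rmid t (f (t - 1)) (f t) := by
    intro k
    induction k with
    | zero =>
      intro i hi
      exact ⟨fun _ => i, rfl, (hz0 i).mp hi, by intro t h1 h2; omega⟩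
    | succ k ih =>
      intro j hj
      obtain ⟨i, hi, hij⟩ := (hzS k j).mp hj
      obtain ⟨f, hfk, hf0, hft⟩ := ih i hi
      refine ⟨fun t => if t ≤ k then f t else j, by simp, by simpa using hf0, ?_⟩
      intro t h1 h2
      rcases Nat.lt_or_ge t (k + 1) with h | h
      · have ht : t ≤ k := by omega
        have ht' : t - 1 ≤ k := by omega
        simpa [ht, ht'] using hft t h1 (by omega)
      · have ht : t = k + 1 := by omega
        subst ht
        simpa [hfk] using hij
  -- cut edges are small
  have hR0le : ∀ j ∈ (z 0)ᶜ, R0 j ≤ M := by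
    intro j hj
    rw [Finset.mem_compl] at hj
    by_contra hgt
    exact hj ((hz0 j).mpr (lt_of_not_ge hgt))
  have hmidle : ∀ k, ∀ p ∈ (z k) ×ˢ (z (k + 1))ᶜ, Rmid (k + 1) p.1 p.2 ≤ M := by
    intro k p hp
    rw [Finset.mem_product] at hp
    obtain ⟨hp1, hp2⟩ := hp
    rw [Finset.mem_compl] at hp2
    by_contra hgt
    exact hp2 ((hzS k p.2).mpr ⟨p.1, hp1, lt_of_not_ge hgt⟩)
  have hRLle : ∀ i ∈ z (L - 1), RL i ≤ M := by
    intro i hi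
    obtain ⟨f, hfk, hf0, hft⟩ := hchain (L - 1) i hi
    by_contra hgt
    have hgt' : M < RL i := lt_of_not_ge hgt
    have hlt : M < pathCapR L N R0 Rmid RL f := by
      unfold pathCapR
      refine (Finset.lt_inf'_iff ..).mpr ?_
      intro t ht
      simp only [Finset.mem_range] at ht
      by_cases h0 : t = 0
      · simpa [h0] using hf0
      · by_cases hLt : t = L
        · simpa [if_neg h0, if_pos hLt, hfk] using hgt'
        · simpa [h0, hLt] using hft t (by omega) (by omega)
    exact absurd (hany_le_M f) (not_le.mpr hlt)
  -- bound the cut value of z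
  have hcardc : ∀ k, (((z k)ᶜ.card : ℝ)) = (N : ℝ) - ((z k).card : ℝ) := by
    intro k
    rw [Finset.card_compl]
    rw [Nat.cast_sub (Finset.card_le_univ _)]
    simp
  have hterm0 : (min 1 ((z 0)ᶜ.card) : ℝ) * finsetMaxOn ((z 0)ᶜ) R0
      ≤ ((1 + ((N : ℝ) - ((z 0).card : ℝ))) / 2) * M := by
    have hmax : finsetMaxOn ((z 0)ᶜ) R0 ≤ M := maxOn_le _ _ hM0 hR0le
    have hmin0 : (0:ℝ) ≤ min 1 (((z 0)ᶜ.card : ℕ) : ℝ) :=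
      le_min one_pos.le (Nat.cast_nonneg _)
    calc (min 1 ((z 0)ᶜ.card) : ℝ) * finsetMaxOn ((z 0)ᶜ) R0
        ≤ (min 1 ((z 0)ᶜ.card) : ℝ) * M := mul_le_mul_of_nonneg_left hmax hmin0
      _ ≤ ((1 + ((N : ℝ) - ((z 0).card : ℝ))) / 2) * M := by
          apply mul_le_mul_of_nonneg_right _ hM0
          rw [← hcardc 0]
          exact min_le_half_add _ _
  have htermL : (min ((z (L - 1)).card) 1 : ℝ) * finsetMaxOn (z (L - 1)) RL
      ≤ ((((z (L - 1)).card : ℝ) + 1) / 2) * M := by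
    have hmax : finsetMaxOn (z (L - 1)) RL ≤ M := maxOn_le _ _ hM0 hRLle
    have hmin0 : (0:ℝ) ≤ min (((z (L - 1)).card : ℕ) : ℝ) 1 :=
      le_min (Nat.cast_nonneg _) one_pos.le
    calc (min ((z (L - 1)).card) 1 : ℝ) * finsetMaxOn (z (L - 1)) RL
        ≤ (min ((z (L - 1)).card) 1 : ℝ) * M := mul_le_mul_of_nonneg_left hmax hmin0
      _ ≤ ((((z (L - 1)).card : ℝ) + 1) / 2) * M := by
          apply mul_le_mul_of_nonneg_right _ hM0
          exact min_le_half_add _ _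
  have htermmid : ∀ k, (min ((z k).card) (((z (k + 1))ᶜ).card) : ℝ) *
      finsetMaxOn ((z k) ×ˢ ((z (k + 1))ᶜ)) (fun p => Rmid (k + 1) p.1 p.2)
      ≤ ((((z k).card : ℝ) + ((N : ℝ) - ((z (k + 1)).card : ℝ))) / 2) * M := by
    intro k
    have hmax : finsetMaxOn ((z k) ×ˢ ((z (k + 1))ᶜ)) (fun p => Rmid (k + 1) p.1 p.2) ≤ M :=
      maxOn_le _ _ hM0 (hmidle k)
    have hmin0 : (0:ℝ) ≤ min (((z k).card : ℕ) : ℝ) ((((z (k + 1))ᶜ).card : ℕ) : ℝ) :=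
      le_min (Nat.cast_nonneg _) (Nat.cast_nonneg _)
    calc (min ((z k).card) (((z (k + 1))ᶜ).card) : ℝ) *
        finsetMaxOn ((z k) ×ˢ ((z (k + 1))ᶜ)) (fun p => Rmid (k + 1) p.1 p.2)
        ≤ (min ((z k).card) (((z (k + 1))ᶜ).card) : ℝ) * M :=
          mul_le_mul_of_nonneg_left hmax hmin0
      _ ≤ ((((z k).card : ℝ) + ((N : ℝ) - ((z (k + 1)).card : ℝ))) / 2) * M := by
          apply mul_le_mul_of_nonneg_right _ hM0
          rw [← hcardc (k + 1)]
          exact min_le_half_add _ _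
  set b : ℕ → ℝ := fun k => ((z k).card : ℝ) with hb
  have hsum : ∑ k ∈ Finset.range (L - 1),
      (((b k) + ((N : ℝ) - (b (k + 1)))) / 2) * M
      = ((b 0 - b (L - 1)) + ((L : ℝ) - 1) * (N : ℝ)) / 2 * M := by
    rw [← Finset.sum_mul]
    congr 1
    have h1 : ∀ k, ((b k) + ((N : ℝ) - (b (k + 1)))) / 2
        = (b k - b (k + 1)) / 2 + (N : ℝ) / 2 := by intro k; ring
    simp_rw [h1]
    rw [Finset.sum_add_distrib, ← Finset.sum_div, Finset.sum_range_sub' b,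
      Finset.sum_const, Finset.card_range, nsmul_eq_mul]
    have hc : (((L - 1 : ℕ)) : ℝ) = (L : ℝ) - 1 := by
      rw [Nat.cast_sub (by omega)]; simp
    rw [hc]
    ring
  have hcut : tildeCutValueR L N R0 Rmid RL z ≤ (((L : ℝ) * (N : ℝ) + 2) / 2) * M := by
    unfold tildeCutValueR
    have hmid : ∑ k ∈ Finset.range (L - 1),
        (min ((z k).card) (((z (k + 1))ᶜ).card) : ℝ) *
          finsetMaxOn ((z k) ×ˢ ((z (k + 1))ᶜ)) (fun p => Rmid (k + 1) p.1 p.2)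
        ≤ ((b 0 - b (L - 1)) + ((L : ℝ) - 1) * (N : ℝ)) / 2 * M := by
      rw [← hsum]
      exact Finset.sum_le_sum (fun k _ => htermmid k)
    have h0 := hterm0
    have hL := htermL
    have hbb : b 0 = ((z 0).card : ℝ) := rfl
    have hbL : b (L - 1) = ((z (L - 1)).card : ℝ) := rfl
    nlinarith [hM0]
  -- conclude
  obtain ⟨g, _, hg⟩ := Finset.exists_mem_eq_sup' hU (fun g => pathCapR L N R0 Rmid RL (ext g))
  refine ⟨ext g, ?_⟩
  rw [← hg]
  have hbdd : BddBelow {c : ℝ | ∃ y : ℕ → Finset (Fin N), c = tildeCutValueR L N R0 Rmid RL y} := by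
    refine ⟨0, ?_⟩
    rintro c ⟨y, rfl⟩
    exact tildeCutValueR_nonneg L N R0 Rmid RL hR0 hRmid hRL y
  have hinf : tildeCapR L N R0 Rmid RL ≤ tildeCutValueR L N R0 Rmid RL z :=
    csInf_le hbdd ⟨z, rfl⟩
  have hden : (0:ℝ) < (L : ℝ) * (N : ℝ) + 2 := by positivity
  calc (2 / ((L : ℝ) * (N : ℝ) + 2)) * tildeCapR L N R0 Rmid RL
      ≤ (2 / ((L : ℝ) * (N : ℝ) + 2)) * ((((L : ℝ) * (N : ℝ) + 2) / 2) * M) := by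
        apply mul_le_mul_of_nonneg_left (hinf.trans hcut) (by positivity)
    _ = M := by field_simp
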